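/- There exist positive constants C₂, C₃, C₄ such that for all real numbers a, b, c: −a · ((a+b+c)³ − b³) ≤ −C₂ a⁴ + C₃ c⁴ + C₄ c² b². -/

import Mathlib

/-!
With `d = a + c` and `Q = x² + x b + b²` for `x = a + b + c`, one has `a (x³ - b³) = a d Q`, and
`a d ≥ (d² - c²) / 2`. The factor `Q` of the cube difference is comparable to `d²` from below
(`d² ≤ 4 Q`) and to `d² + b²` from above, so `a (x³ - b³) ≳ d⁴ - c² d² - c² b²`; Young's inequality
absorbs `c² d²` into `d⁴` and `c⁴`, and finally `a⁴ ≤ 8 (d⁴ + c⁴)`.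
-/

section OrderedRing

variable {R : Type*} [CommRing R] [LinearOrder R] [IsStrictOrderedRing R]

theorem sq_sub_le_four_mul_sq_add_mul_add_sq (x y : R) :
    (x - y) ^ 2 ≤ 4 * (x ^ 2 + x * y + y ^ 2) := by
  nlinarith [sq_nonneg (x + y)]

theorem two_mul_sq_add_mul_add_sq_le (x y : R) :
    2 * (x ^ 2 + x * y + y ^ 2) ≤ 6 * (x - y) ^ 2 + 9 * y ^ 2 := by
  nlinarith [sq_nonneg (4 * (x - y) - 3 * y), sq_nonneg y]

theorem add_pow_four_le (u v : R) : (u + v) ^ 4 ≤ 8 * (u ^ 4 + v ^ 4) := by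
  convert (by decide : Even 4).add_pow_le (a := u) (b := v) using 2
  norm_num

end OrderedRing

section OrderedField

variable {K : Type*} [Field K] [LinearOrder K] [IsStrictOrderedRing K]

theorem le_mul_add_add_pow_three_sub_pow_three (a b c : K) :
    a ^ 4 / 128 - 10 * c ^ 4 - 3 * c ^ 2 * b ^ 2 ≤ a * ((a + b + c) ^ 3 - b ^ 3) := by
  set Q := (a + b + c) ^ 2 + (a + b + c) * b + b ^ 2 with hQ
  have hd : a + b + c - b = a + c := by ring
  have hQ_lower : (a + c) ^ 2 ≤ 4 * Q := hd ▸ sq_sub_le_four_mul_sq_add_mul_add_sq (a + b + c) b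
  have hQ_upper : 2 * Q ≤ 6 * (a + c) ^ 2 + 9 * b ^ 2 :=
    hd ▸ two_mul_sq_add_mul_add_sq_le (a + b + c) b
  have hQ_nonneg : 0 ≤ Q := by linarith [sq_nonneg (a + c)]
  have h_young : 3 / 2 * c ^ 2 * (a + c) ^ 2 ≤ (a + c) ^ 4 / 16 + 9 * c ^ 4 := by
    nlinarith [two_mul_le_add_sq ((a + c) ^ 2 / 4) (3 * c ^ 2)]
  have h_pow_four : a ^ 4 ≤ 8 * ((a + c) ^ 4 + c ^ 4) := by
    simpa [Even.neg_pow (by decide : Even 4)] using add_pow_four_le (a + c) (-c)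
  calc a ^ 4 / 128 - 10 * c ^ 4 - 3 * c ^ 2 * b ^ 2
      ≤ (a + c) ^ 2 / 2 * ((a + c) ^ 2 / 4) - c ^ 2 / 2 * (3 * (a + c) ^ 2 + 9 / 2 * b ^ 2) := by
        linarith [pow_two_nonneg (c ^ 2), mul_nonneg (sq_nonneg c) (sq_nonneg b)]
    _ ≤ (a + c) ^ 2 / 2 * Q - c ^ 2 / 2 * Q := by
        gcongr <;> linarith
    _ ≤ a * (a + c) * Q := by
        nlinarith [mul_nonneg (sq_nonneg a) hQ_nonneg]
    _ = a * ((a + b + c) ^ 3 - b ^ 3) := by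
        rw [hQ]; ring

end OrderedField

/-- There exist positive constants C₂, C₃, C₄ such that for all real numbers a, b, c:
−a · ((a+b+c)³ − b³) ≤ −C₂ a⁴ + C₃ c⁴ + C₄ c² b². -/
theorem stmt_10 :
    ∃ C₂ C₃ C₄ : ℝ, 0 < C₂ ∧ 0 < C₃ ∧ 0 < C₄ ∧ ∀ a b c : ℝ,
      -a * ((a + b + c) ^ 3 - b ^ 3) ≤ -C₂ * a ^ 4 + C₃ * c ^ 4 + C₄ * c ^ 2 * b ^ 2 := by
  refine ⟨1 / 128, 10, 3, by norm_num, by norm_num, by norm_num, fun a b c => ?_⟩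
  linarith [le_mul_add_add_pow_three_sub_pow_three a b c]
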